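/- For n ≥ 1, ∑_{k=0}^{n−1} 𝔽_k/(k+1) = (s(n+1,2)/n!)·𝔽_n − ∑_{k=0}^{n−1} s(k+2,2)/((k+1)!·F_{k+1}), where s(a,b) denotes the unsigned Stirling numbers of the first kind. -/

import Mathlib

/-! By the recurrence `s(n+1, 2) = n s(n, 2) + (n-1)!` one has `s(n+1, 2) = n! H_n`, so the identity
is Abel summation of `∑ 𝔽_k (H_{k+1} - H_k)` against `𝔽_{k+1} - 𝔽_k = 1 / F_{k+1}`. -/

open Finset

noncomputable def harmFib (n : ℕ) : ℝ := ∑ k ∈ Finset.Icc 1 n, (1 : ℝ) / Nat.fib k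

def stirling1 : ℕ → ℕ → ℕ
  | 0, 0 => 1
  | 0, _ + 1 => 0
  | _ + 1, 0 => 0
  | n + 1, k + 1 => n * stirling1 n (k + 1) + stirling1 n k

open scoped Nat

lemma stirling1_succ_one (n : ℕ) : stirling1 (n + 1) 1 = n ! := by
  induction n with
  | zero => rfl
  | succ n ih =>
    rw [stirling1, ih, stirling1, Nat.factorial_succ]
    simp

lemma stirling1_succ_two (n : ℕ) : (stirling1 (n + 1) 2 : ℝ) = n ! * harmonic n := by
  induction n with
  | zero => simp [stirling1]
  | succ n ih =>
    rw [stirling1, Nat.cast_add, Nat.cast_mul, ih, stirling1_succ_one, harmonic_succ,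
      Nat.factorial_succ]
    push_cast
    field_simp

lemma harmFib_succ (n : ℕ) : harmFib (n + 1) = harmFib n + 1 / Nat.fib (n + 1) :=
  Finset.sum_Icc_succ_top (Nat.le_add_left 1 n) _

lemma sum_harmFib_div_succ (n : ℕ) :
    ∑ k ∈ range n, harmFib k / (k + 1) =
      harmonic n * harmFib n - ∑ k ∈ range n, (harmonic (k + 1) : ℝ) / Nat.fib (k + 1) := by
  induction n with
  | zero => simp
  | succ n ih =>
    rw [sum_range_succ, sum_range_succ, ih, harmonic_succ, harmFib_succ]
    push_cast
    ring

theorem stmt_16_general (n : ℕ) :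
    ∑ k ∈ Finset.range n, harmFib k / (k + 1) =
      ((stirling1 (n + 1) 2 : ℝ) / Nat.factorial n) * harmFib n -
        ∑ k ∈ Finset.range n,
          (stirling1 (k + 2) 2 : ℝ) / ((Nat.factorial (k + 1)) * Nat.fib (k + 1)) := by
  have hfac (m : ℕ) : (m ! : ℝ) ≠ 0 := by positivity
  rw [sum_harmFib_div_succ, stirling1_succ_two, mul_div_cancel_left₀ _ (hfac n)]
  congr 1
  refine sum_congr rfl fun k _ => ?_
  rw [stirling1_succ_two, mul_div_mul_left _ _ (hfac (k + 1))]

theorem stmt_16 (n : ℕ) (hn : 1 ≤ n) :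
    ∑ k ∈ Finset.range n, harmFib k / (k + 1) =
      ((stirling1 (n + 1) 2 : ℝ) / Nat.factorial n) * harmFib n -
        ∑ k ∈ Finset.range n,
          (stirling1 (k + 2) 2 : ℝ) / ((Nat.factorial (k + 1)) * Nat.fib (k + 1)) :=
  stmt_16_general n
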